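/- arXiv:2305.06884 — 4 statements merged into one kernel-verified Lean document; each statement's English description precedes it below -/
import Mathlib

section
/- For any sampling strategy (q_t) and any betting strategy (λ_t(m*)), the wealth process (W_t(m*))_{t=0}^N evaluated at the true misstated fraction m* is a nonnegative martingale with respect to the filtration (F_t) with initial value W_0(m*) = 1. -/
/-!
Since `I_1, …, I_{t-1}` are distinct,
`Σ_{i ∈ N_t} π(i) f(i) = m* − Σ_{j<t} π(I_j) f(I_j) = μ_t(m*)`, so the importance weighting gives
`E[Z_t | F_{t-1}] = Σ_{i ∈ N_t} q_t(i) f(i) π(i)/q_t(i) = μ_t(m*)`. Hence every bet factor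
`1 + λ_t (Z_t − μ_t(m*))` has conditional mean one, and because `W_{t-1}` and `λ_t` are
predictable the wealth is a martingale.
-/

open MeasureTheory Finset

namespace RLFA

variable {Ω : Type*}

/-- `remaining I t ω` is the set `N_t = {1,…,N} \ {I_1, …, I_{t-1}}` of indices not yet
sampled before time `t`. -/
def remaining {N : ℕ} (I : ℕ → Ω → Fin N) (t : ℕ) (ω : Ω) : Finset (Fin N) :=
  Finset.univ \ (Finset.Icc 1 (t - 1)).image fun j => I j ω

/-- The filtration `F_t = σ(I_1, …, I_t)`. -/
def filt {N : ℕ} (I : ℕ → Ω → Fin N) (t : ℕ) : MeasurableSpace Ω :=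
  ⨆ j ∈ Finset.Icc 1 t, MeasurableSpace.comap (I j) ⊤

/-- The importance-weighted observation `Z_t = f(I_t) · π(I_t) / q_t(I_t)`. -/
noncomputable def Zt {N : ℕ} (π f : Fin N → ℝ) (q : ℕ → Ω → Fin N → ℝ)
    (I : ℕ → Ω → Fin N) (t : ℕ) (ω : Ω) : ℝ :=
  f (I t ω) * (π (I t ω) / q t ω (I t ω))

/-- `μ_t(m) = m − Σ_{j=1}^{t−1} π(I_j) f(I_j)`. -/
def muT {N : ℕ} (π f : Fin N → ℝ) (I : ℕ → Ω → Fin N) (m : ℝ) (t : ℕ) (ω : Ω) : ℝ :=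
  m - ∑ j ∈ Finset.Icc 1 (t - 1), π (I j ω) * f (I j ω)

lemma sum_mul_one_add_mul_sub_eq_one {ι : Type*} {s : Finset ι} {q a b : ι → ℝ} {l c : ℝ}
    (hq : ∀ i ∈ s, q i ≠ 0) (hq_sum : ∑ i ∈ s, q i = 1) (hc : ∑ i ∈ s, b i * a i = c) :
    ∑ i ∈ s, q i * (1 + l * (a i * (b i / q i) - c)) = 1 := by
  have hterm : ∀ i ∈ s,
      q i * (1 + l * (a i * (b i / q i) - c)) = (1 - l * c) * q i + l * (b i * a i) := by
    intro i hi
    field_simp [hq i hi]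
    ring
  rw [sum_congr rfl hterm, sum_add_distrib, ← mul_sum, ← mul_sum, hq_sum, hc]
  ring

variable {N : ℕ}

section MulRecursion

variable {W R : ℕ → Ω → ℝ}

lemma stronglyMeasurable_of_mul_recursion {ℱ : ℕ → MeasurableSpace Ω} (hℱ : Monotone ℱ)
    (hW0 : ∀ ω, W 0 ω = 1) (hR : ∀ t, 1 ≤ t → t ≤ N → StronglyMeasurable[ℱ t] (R t))
    (hrec : ∀ t, 1 ≤ t → t ≤ N → ∀ ω, W t ω = W (t - 1) ω * R t ω) :
    ∀ t ≤ N, StronglyMeasurable[ℱ t] (W t)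
  | 0, _ => by
    rw [funext hW0]
    exact stronglyMeasurable_const
  | t + 1, ht => by
    rw [funext (hrec (t + 1) (by omega) ht)]
    exact ((stronglyMeasurable_of_mul_recursion hℱ hW0 hR hrec t (by omega)).mono
      (hℱ t.le_succ)).mul (hR (t + 1) (by omega) ht)

lemma ae_nonneg_of_mul_recursion [MeasurableSpace Ω] {μ : Measure Ω} (hW0 : ∀ ω, W 0 ω = 1)
    (hR : ∀ t, 1 ≤ t → t ≤ N → ∀ᵐ ω ∂μ, 0 ≤ R t ω)
    (hrec : ∀ t, 1 ≤ t → t ≤ N → ∀ ω, W t ω = W (t - 1) ω * R t ω) :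
    ∀ t ≤ N, ∀ᵐ ω ∂μ, 0 ≤ W t ω
  | 0, _ => .of_forall fun ω => (hW0 ω).symm ▸ zero_le_one
  | t + 1, ht => by
    filter_upwards [ae_nonneg_of_mul_recursion hW0 hR hrec t (by omega),
      hR (t + 1) (by omega) ht] with ω hW hRω
    rw [hrec (t + 1) (by omega) ht ω]
    exact mul_nonneg hW hRω

end MulRecursion

lemma stronglyMeasurable_apply_index {ι : Type*} [Countable ι] [MeasurableSpace ι]
    [MeasurableSingletonClass ι] {m : MeasurableSpace Ω} {J : Ω → ι} (hJ : Measurable[m] J)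
    {F : Ω → ι → ℝ} (hF : ∀ i, StronglyMeasurable[m] fun ω => F ω i) :
    StronglyMeasurable[m] fun ω => F ω (J ω) :=
  ((measurable_from_prod_countable_left (f := fun p : Ω × ι => F p.1 p.2)
    fun i => (hF i).measurable).comp (measurable_id.prodMk hJ)).stronglyMeasurable

lemma filt_mono (I : ℕ → Ω → Fin N) : Monotone (filt I) := fun _ _ hst =>
  iSup₂_le fun j hj => le_iSup₂_of_le (f := fun j (_ : j ∈ Icc 1 _) => _) j
    (by simp only [mem_Icc] at hj ⊢; omega) le_rfl

lemma measurable_filt {I : ℕ → Ω → Fin N} {j t : ℕ} (hj : j ∈ Icc 1 t) :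
    Measurable[filt I t] (I j) :=
  measurable_iff_comap_le.mpr <|
    le_iSup₂_of_le (f := fun j (_ : j ∈ Icc 1 t) => MeasurableSpace.comap (I j) ⊤) j hj le_rfl

lemma stronglyMeasurable_muT (π f : Fin N → ℝ) (I : ℕ → Ω → Fin N) (m : ℝ) (t : ℕ) :
    StronglyMeasurable[filt I (t - 1)] (muT π f I m t) :=
  stronglyMeasurable_const.sub <| stronglyMeasurable_fun_sum _ fun _ hj =>
    ((measurable_of_finite fun i => π i * f i).comp (measurable_filt hj)).stronglyMeasurable

lemma stronglyMeasurable_Zt (π f : Fin N → ℝ) {q : ℕ → Ω → Fin N → ℝ} {I : ℕ → Ω → Fin N}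
    {t : ℕ} (ht : 1 ≤ t) (hq : ∀ i, StronglyMeasurable[filt I (t - 1)] fun ω => q t ω i) :
    StronglyMeasurable[filt I t] (Zt π f q I t) :=
  stronglyMeasurable_apply_index (measurable_filt (mem_Icc.mpr ⟨ht, le_rfl⟩)) fun i =>
    (measurable_const.mul (measurable_const.div
      (((hq i).mono (filt_mono I (Nat.sub_le t 1))).measurable))).stronglyMeasurable

lemma injOn_of_mem_remaining {I : ℕ → Ω → Fin N} {ω : Ω} {s : ℕ}
    (h : ∀ k ∈ Icc 1 s, I k ω ∈ remaining I k ω) : Set.InjOn (fun j => I j ω) (Icc 1 s) := by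
  have hne : ∀ j ∈ Icc 1 s, ∀ k ∈ Icc 1 s, j < k → I j ω ≠ I k ω := by
    intro j hj k hk hjk hjk_eq
    have hk_fresh := h k hk
    simp only [remaining, mem_sdiff, mem_image, mem_Icc, not_exists, not_and] at hk_fresh hj
    exact hk_fresh.2 j ⟨hj.1, by omega⟩ hjk_eq
  intro j hj k hk hjk_eq
  by_contra hjk
  rcases Nat.lt_or_gt_of_ne hjk with hlt | hgt
  · exact hne j hj k hk hlt hjk_eq
  · exact hne k hk j hj hgt hjk_eq.symm

lemma sum_remaining_eq_muT (π f : Fin N → ℝ) {I : ℕ → Ω → Fin N} {ω : Ω} {t : ℕ}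
    (h : ∀ k ∈ Icc 1 (t - 1), I k ω ∈ remaining I k ω) :
    ∑ i ∈ remaining I t ω, π i * f i = muT π f I (∑ i, π i * f i) t ω := by
  rw [remaining, sum_sdiff_eq_sub (subset_univ _), sum_image (injOn_of_mem_remaining h)]
  rfl

lemma condExp_eq_of_wealth_step [MeasurableSpace Ω] (μ : Measure Ω) (π f : Fin N → ℝ)
    {q : ℕ → Ω → Fin N → ℝ} {I : ℕ → Ω → Fin N} {t : ℕ} {l W' W : Ω → ℝ}
    (hq_meas : ∀ i, StronglyMeasurable[filt I (t - 1)] fun ω => q t ω i)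
    (hq_pos : ∀ ω, ∀ i ∈ remaining I t ω, 0 < q t ω i)
    (hq_sum : ∀ ω, ∑ i ∈ remaining I t ω, q t ω i = 1)
    (hWoR : ∀ ω, ∀ k ∈ Icc 1 (t - 1), I k ω ∈ remaining I k ω)
    (hcond : ∀ G : Ω → Fin N → ℝ, (∀ i, StronglyMeasurable[filt I (t - 1)] fun ω => G ω i) →
      μ[(fun ω => G ω (I t ω)) | filt I (t - 1)]
        =ᵐ[μ] fun ω => ∑ i ∈ remaining I t ω, q t ω i * G ω i)
    (hl : StronglyMeasurable[filt I (t - 1)] l) (hW' : StronglyMeasurable[filt I (t - 1)] W')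
    (hrec : ∀ ω, W ω = W' ω * (1 + l ω * (Zt π f q I t ω - muT π f I (∑ i, π i * f i) t ω))) :
    μ[W | filt I (t - 1)] =ᵐ[μ] W' := by
  set m := ∑ i, π i * f i
  let G : Ω → Fin N → ℝ := fun ω i => W' ω * (1 + l ω * (f i * (π i / q t ω i) - muT π f I m t ω))
  have hG : ∀ i, StronglyMeasurable[filt I (t - 1)] fun ω => G ω i := fun i =>
    hW'.mul <| stronglyMeasurable_const.add <| hl.mul <|
      (measurable_const.mul (measurable_const.div (hq_meas i).measurable)).stronglyMeasurable.sub
        (stronglyMeasurable_muT π f I m t)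
  have hW : W = fun ω => G ω (I t ω) := funext hrec
  rw [hW]
  refine (hcond G hG).trans (.of_forall fun ω => ?_)
  simp only [G, mul_left_comm (q t ω _) (W' ω), ← mul_sum]
  rw [sum_mul_one_add_mul_sub_eq_one (fun i hi => (hq_pos ω i hi).ne') (hq_sum ω)
    (sum_remaining_eq_muT π f (hWoR ω)), mul_one]

theorem statement1_general
    [m0 : MeasurableSpace Ω] (μ : Measure Ω)
    {N : ℕ}
    (π f : Fin N → ℝ)
    (I : ℕ → Ω → Fin N)
    (q : ℕ → Ω → Fin N → ℝ)
    (hq_meas : ∀ t, 1 ≤ t → t ≤ N → ∀ i,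
      StronglyMeasurable[filt I (t - 1)] fun ω => q t ω i)
    (hq_pos : ∀ t ω, 1 ≤ t → t ≤ N → ∀ i ∈ remaining I t ω, 0 < q t ω i)
    (hq_sum : ∀ t ω, 1 ≤ t → t ≤ N → ∑ i ∈ remaining I t ω, q t ω i = 1)
    (hWoR : ∀ t ω, 1 ≤ t → t ≤ N → I t ω ∈ remaining I t ω)
    (hcond : ∀ t, 1 ≤ t → t ≤ N → ∀ G : Ω → Fin N → ℝ,
      (∀ i, StronglyMeasurable[filt I (t - 1)] fun ω => G ω i) →
      μ[(fun ω => G ω (I t ω)) | filt I (t - 1)]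
        =ᵐ[μ] fun ω => ∑ i ∈ remaining I t ω, q t ω i * G ω i)
    (mstar : ℝ) (hmstar : mstar = ∑ i, π i * f i)
    -- the betting strategy `(λ_t(m*))`: predictable, and keeping the wealth nonnegative
    (lam : ℕ → Ω → ℝ)
    (hlam_meas : ∀ t, 1 ≤ t → t ≤ N → StronglyMeasurable[filt I (t - 1)] (lam t))
    (hfac : ∀ t, 1 ≤ t → t ≤ N →
      ∀ᵐ ω ∂μ, 0 ≤ 1 + lam t ω * (Zt π f q I t ω - muT π f I mstar t ω))
    -- the wealth process `W_t(m*)`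
    (W : ℕ → Ω → ℝ)
    (hW0 : ∀ ω, W 0 ω = 1)
    (hWrec : ∀ t, 1 ≤ t → t ≤ N → ∀ ω,
      W t ω = W (t - 1) ω * (1 + lam t ω * (Zt π f q I t ω - muT π f I mstar t ω))) :
    (∀ ω, W 0 ω = 1) ∧
    (∀ t, t ≤ N → StronglyMeasurable[filt I t] (W t)) ∧
    (∀ t, t ≤ N → ∀ᵐ ω ∂μ, 0 ≤ W t ω) ∧
    (∀ t, 1 ≤ t → t ≤ N → μ[W t | filt I (t - 1)] =ᵐ[μ] W (t - 1)) := by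
  subst hmstar
  let R : ℕ → Ω → ℝ := fun t ω =>
    1 + lam t ω * (Zt π f q I t ω - muT π f I (∑ i, π i * f i) t ω)
  have hR_meas : ∀ t, 1 ≤ t → t ≤ N → StronglyMeasurable[filt I t] (R t) := fun t ht htN =>
    have hle := filt_mono I (Nat.sub_le t 1)
    stronglyMeasurable_const.add <| ((hlam_meas t ht htN).mono hle).mul <|
      (stronglyMeasurable_Zt π f ht (hq_meas t ht htN)).sub
        ((stronglyMeasurable_muT π f I _ t).mono hle)
  have hW_meas := stronglyMeasurable_of_mul_recursion (filt_mono I) hW0 hR_meas hWrec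
  refine ⟨hW0, hW_meas, ae_nonneg_of_mul_recursion (R := R) hW0 hfac hWrec,
    fun t ht htN => ?_⟩
  exact condExp_eq_of_wealth_step μ π f (hq_meas t ht htN) (fun ω => hq_pos t ω ht htN)
    (fun ω => hq_sum t ω ht htN)
    (fun ω k hk => hWoR k ω (mem_Icc.mp hk).1 (by have := (mem_Icc.mp hk).2; omega))
    (hcond t ht htN) (hlam_meas t ht htN) (hW_meas (t - 1) (by omega)) (hWrec t ht htN)

/-- For any sampling strategy `(q_t)` and any betting strategy `(λ_t(m*))`,
the wealth process `(W_t(m*))_{t=0}^N` evaluated at the true misstated fraction `m*` is a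
nonnegative martingale with respect to the filtration `(F_t)` with initial value `W_0(m*) = 1`. -/
theorem statement1
    [m0 : MeasurableSpace Ω] (μ : Measure Ω) [IsProbabilityMeasure μ]
    {N : ℕ} (hN : 1 ≤ N)
    (π f : Fin N → ℝ)
    (hπ : ∀ i, π i ∈ Set.Ioc (0 : ℝ) 1) (hπsum : ∑ i, π i = 1)
    (hf : ∀ i, f i ∈ Set.Icc (0 : ℝ) 1)
    (I : ℕ → Ω → Fin N) (hI : ∀ t, Measurable (I t))
    (q : ℕ → Ω → Fin N → ℝ)
    (hq_meas : ∀ t, 1 ≤ t → t ≤ N → ∀ i,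
      StronglyMeasurable[filt I (t - 1)] fun ω => q t ω i)
    (hq_pos : ∀ t ω, 1 ≤ t → t ≤ N → ∀ i ∈ remaining I t ω, 0 < q t ω i)
    (hq_sum : ∀ t ω, 1 ≤ t → t ≤ N → ∑ i ∈ remaining I t ω, q t ω i = 1)
    (hWoR : ∀ t ω, 1 ≤ t → t ≤ N → I t ω ∈ remaining I t ω)
    (hcond : ∀ t, 1 ≤ t → t ≤ N → ∀ G : Ω → Fin N → ℝ,
      (∀ i, StronglyMeasurable[filt I (t - 1)] fun ω => G ω i) →
      μ[(fun ω => G ω (I t ω)) | filt I (t - 1)]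
        =ᵐ[μ] fun ω => ∑ i ∈ remaining I t ω, q t ω i * G ω i)
    (mstar : ℝ) (hmstar : mstar = ∑ i, π i * f i)
    -- the betting strategy `(λ_t(m*))`: predictable, and keeping the wealth nonnegative
    (lam : ℕ → Ω → ℝ)
    (hlam_meas : ∀ t, 1 ≤ t → t ≤ N → StronglyMeasurable[filt I (t - 1)] (lam t))
    (hfac : ∀ t, 1 ≤ t → t ≤ N →
      ∀ᵐ ω ∂μ, 0 ≤ 1 + lam t ω * (Zt π f q I t ω - muT π f I mstar t ω))
    -- the wealth process `W_t(m*)`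
    (W : ℕ → Ω → ℝ)
    (hW0 : ∀ ω, W 0 ω = 1)
    (hWrec : ∀ t, 1 ≤ t → t ≤ N → ∀ ω,
      W t ω = W (t - 1) ω * (1 + lam t ω * (Zt π f q I t ω - muT π f I mstar t ω))) :
    (∀ ω, W 0 ω = 1) ∧
    (∀ t, t ≤ N → StronglyMeasurable[filt I t] (W t)) ∧
    (∀ t, t ≤ N → ∀ᵐ ω ∂μ, 0 ≤ W t ω) ∧
    (∀ t, 1 ≤ t → t ≤ N → μ[W t | filt I (t - 1)] =ᵐ[μ] W (t - 1)) :=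
  statement1_general (m0 := m0) μ π f I q hq_meas hq_pos hq_sum hWoR hcond mstar hmstar lam
    hlam_meas hfac W hW0 hWrec

end RLFA
end

section
/- (Empirical-Bernstein increment inequality, equation (C.1).) Let X ≥ 0 be an integrable random variable with mean μ = E[X], let a > 0 and λ ∈ [0, 1/a), and set ψ_E^a(λ) = (−log(1 − aλ) − aλ)/a². Then E[exp(λ(X − μ) − (X − a)² ψ_E^a(λ))] ≤ 1. -/
/-!
Put `z = X - a ≥ -a`. For fixed `z`, the function
`t ↦ log (1 + t z) - t z + z² ψ_E^a(t)` vanishes at `t = 0` and has derivative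
`t² z² (z + a) / ((1 + t z)(1 - a t)) ≥ 0` on `[0, λ]`, so
`exp (λ z - z² ψ_E^a(λ)) ≤ 1 + λ z`. Taking expectations, the left-hand side of the
theorem is at most `exp (-c) (1 + c)` with `c = λ (E[X] - a)`, and `1 + c ≤ exp c`.
-/

open MeasureTheory

namespace RLFA

noncomputable def psiE (a lam : ℝ) : ℝ := (-Real.log (1 - a * lam) - a * lam) / a ^ 2

@[simp]
lemma psiE_zero_right (a : ℝ) : psiE a 0 = 0 := by
  simp [psiE]

lemma hasDerivAt_psiE {a t : ℝ} (ha : a ≠ 0) (ht : 1 - a * t ≠ 0) :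
    HasDerivAt (psiE a) (t / (1 - a * t)) t := by
  have hlin : HasDerivAt (fun s => 1 - a * s) (-a) t := by
    simpa using ((hasDerivAt_id t).const_mul a).const_sub 1
  have h := (((hlin.log ht).fun_neg).fun_sub ((hasDerivAt_id' t).const_mul a)).div_const
    (a ^ 2)
  refine h.congr_deriv ?_
  field_simp
  ring

lemma mul_sub_sq_mul_psiE_le_log {a lam z : ℝ} (ha : 0 < a) (hlam : 0 ≤ lam)
    (hlam_lt : a * lam < 1) (hz : -a ≤ z) :
    lam * z - z ^ 2 * psiE a lam ≤ Real.log (1 + lam * z) := by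
  set G : ℝ → ℝ := fun t => Real.log (1 + t * z) - t * z + z ^ 2 * psiE a t
  have hpos : ∀ t ∈ Set.Icc 0 lam, 0 < 1 - a * t ∧ 0 < 1 + t * z := by
    rintro t ⟨ht0, htl⟩
    constructor <;> nlinarith
  have hderiv : ∀ t ∈ Set.Icc 0 lam,
      HasDerivAt G (t ^ 2 * z ^ 2 * (z + a) / ((1 + t * z) * (1 - a * t))) t := by
    intro t ht
    obtain ⟨h1, h2⟩ := hpos t ht
    have hlin : HasDerivAt (fun s => 1 + s * z) z t := by
      simpa using ((hasDerivAt_id t).mul_const z).const_add 1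
    have h := ((hlin.log h2.ne').fun_sub ((hasDerivAt_id' t).mul_const z)).fun_add
      ((hasDerivAt_psiE ha.ne' h1.ne').const_mul (z ^ 2))
    refine h.congr_deriv ?_
    rw [eq_div_iff (mul_ne_zero h2.ne' h1.ne')]
    linear_combination (1 - a * t) * div_mul_cancel₀ z h2.ne'
      + z ^ 2 * (1 + t * z) * div_mul_cancel₀ t h1.ne'
  have hmono : MonotoneOn G (Set.Icc 0 lam) := by
    refine monotoneOn_of_hasDerivWithinAt_nonneg (convex_Icc 0 lam)
      (fun t ht => (hderiv t ht).continuousAt.continuousWithinAt)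
      (fun t ht => (hderiv t (interior_subset ht)).hasDerivWithinAt) ?_
    intro t ht
    obtain ⟨h1, h2⟩ := hpos t (interior_subset ht)
    have : 0 ≤ z + a := by linarith
    positivity
  have := hmono (Set.left_mem_Icc.2 hlam) (Set.right_mem_Icc.2 hlam) hlam
  simp only [G, zero_mul, add_zero, Real.log_one, sub_zero, psiE_zero_right, mul_zero] at this
  linarith

lemma exp_mul_sub_sq_mul_psiE_le {a lam z : ℝ} (ha : 0 < a) (hlam : 0 ≤ lam)
    (hlam_lt : a * lam < 1) (hz : -a ≤ z) :
    Real.exp (lam * z - z ^ 2 * psiE a lam) ≤ 1 + lam * z := by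
  have hpos : 0 < 1 + lam * z := by nlinarith
  calc Real.exp (lam * z - z ^ 2 * psiE a lam)
      ≤ Real.exp (Real.log (1 + lam * z)) :=
        Real.exp_le_exp.2 (mul_sub_sq_mul_psiE_le_log ha hlam hlam_lt hz)
    _ = 1 + lam * z := Real.exp_log hpos

lemma exp_neg_mul_one_add_le_one (c : ℝ) : Real.exp (-c) * (1 + c) ≤ 1 := by
  calc Real.exp (-c) * (1 + c) ≤ Real.exp (-c) * Real.exp c := by
        gcongr
        linarith [Real.add_one_le_exp c]
    _ = 1 := by rw [← Real.exp_add, neg_add_cancel, Real.exp_zero]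

/-- **Empirical-Bernstein increment inequality, equation (C.1).**
Let `X ≥ 0` be an integrable random variable with mean `μ = E[X]`, let `a > 0` and
`λ ∈ [0, 1/a)`, and set `ψ_E^a(λ) = (−log(1 − aλ) − aλ)/a²`. Then
`E[exp(λ(X − μ) − (X − a)² ψ_E^a(λ))] ≤ 1`. -/
theorem statement16
    {Ω : Type*} [MeasurableSpace Ω] (μ : Measure Ω) [IsProbabilityMeasure μ]
    (X : Ω → ℝ) (hX : Integrable X μ) (hX0 : ∀ᵐ ω ∂μ, 0 ≤ X ω)
    (a lam : ℝ) (ha : 0 < a) (hlam0 : 0 ≤ lam) (hlam1 : lam < 1 / a) :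
    ∫ ω, Real.exp (lam * (X ω - ∫ x, X x ∂μ) -
        (X ω - a) ^ 2 * ((-Real.log (1 - a * lam) - a * lam) / a ^ 2)) ∂μ ≤ 1 := by
  set m := ∫ x, X x ∂μ
  have hlam_lt : a * lam < 1 := by rwa [lt_div_iff₀ ha, mul_comm] at hlam1
  have hbound : ∀ᵐ ω ∂μ, Real.exp (lam * (X ω - m) - (X ω - a) ^ 2 * psiE a lam)
      ≤ Real.exp (-(lam * (m - a))) * (1 + lam * (X ω - a)) := by
    filter_upwards [hX0] with ω hω
    rw [show lam * (X ω - m) - (X ω - a) ^ 2 * psiE a lam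
        = -(lam * (m - a)) + (lam * (X ω - a) - (X ω - a) ^ 2 * psiE a lam) by ring,
      Real.exp_add]
    gcongr
    exact exp_mul_sub_sq_mul_psiE_le ha hlam0 hlam_lt (by linarith)
  have hXa : Integrable (fun ω => X ω - a) μ := hX.sub (integrable_const a)
  have hint : Integrable (fun ω => Real.exp (-(lam * (m - a))) * (1 + lam * (X ω - a))) μ :=
    ((integrable_const 1).add (hXa.const_mul lam)).const_mul _
  calc ∫ ω, Real.exp (lam * (X ω - m) - (X ω - a) ^ 2 * psiE a lam) ∂μ
      ≤ ∫ ω, Real.exp (-(lam * (m - a))) * (1 + lam * (X ω - a)) ∂μ :=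
        integral_mono_of_nonneg (.of_forall fun _ => (Real.exp_pos _).le) hint hbound
    _ = Real.exp (-(lam * (m - a))) * (1 + lam * (m - a)) := by
        rw [integral_const_mul, integral_add (integrable_const 1) (hXa.const_mul lam),
          integral_const_mul, integral_sub hX (integrable_const a)]
        simp [m]
    _ ≤ 1 := exp_neg_mul_one_add_le_one _

end RLFA
end

section
/- (Lemma 4.1 of Fan et al., as used in the paper.) Let c > 0, let ξ be a real number with ξ ≥ −c, and let λ ∈ [0, 1/c). Then 1 + λξ ≥ exp(λξ + (ξ²/c²)(log(1 − cλ) + cλ)). -/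
/-!
Put `x = λξ` and `b = cλ ∈ (0, 1)`; after taking logarithms the claim is
`log (1 + x) - x ≥ x² (log (1 - b) + b) / b²` for `x ≥ -b`.
For `x ≥ 0` the left side is at least `-x²/2`, while the ratio on the right is at most `-1/2`.
For `-b ≤ x < 0`, the expansion `-log (1 - a) - a = ∑ aⁿ⁺² / (n + 2)` shows that
`(-log (1 - a) - a) / a²` is increasing on `[0, 1)`; compare `a = -x` with `b`.
-/

namespace RLFA

open Real

theorem hasSum_neg_log_one_sub_sub {b : ℝ} (hb : |b| < 1) :
    HasSum (fun n : ℕ => b ^ (n + 2) / (n + 2)) (-log (1 - b) - b) := by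
  have h := (hasSum_nat_add_iff' 1).mpr (hasSum_pow_div_log_of_abs_lt_one hb)
  simpa [add_assoc, one_add_one_eq_two] using h

theorem sq_div_two_le_neg_log_one_sub_sub {b : ℝ} (hb0 : 0 ≤ b) (hb1 : b < 1) :
    b ^ 2 / 2 ≤ -log (1 - b) - b := by
  have h := le_hasSum (hasSum_neg_log_one_sub_sub (abs_lt.mpr ⟨by linarith, hb1⟩)) 0
    fun n _ => by positivity
  simpa using h

theorem sq_mul_neg_log_one_sub_sub_le {a b : ℝ} (ha : 0 ≤ a) (hab : a ≤ b) (hb : b < 1) :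
    b ^ 2 * (-log (1 - a) - a) ≤ a ^ 2 * (-log (1 - b) - b) := by
  refine hasSum_le (fun n => ?_)
    ((hasSum_neg_log_one_sub_sub (abs_lt.mpr ⟨by linarith, by linarith⟩)).mul_left (b ^ 2))
    ((hasSum_neg_log_one_sub_sub (abs_lt.mpr ⟨by linarith, hb⟩)).mul_left (a ^ 2))
  have key : b ^ 2 * a ^ (n + 2) ≤ a ^ 2 * b ^ (n + 2) :=
    calc b ^ 2 * a ^ (n + 2) = a ^ 2 * b ^ 2 * a ^ n := by ring
      _ ≤ a ^ 2 * b ^ 2 * b ^ n := by gcongr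
      _ = a ^ 2 * b ^ (n + 2) := by ring
  simp only [mul_div_assoc']
  gcongr

theorem sub_sq_div_two_le_log_one_add {x : ℝ} (hx : 0 ≤ x) : x - x ^ 2 / 2 ≤ log (1 + x) := by
  refine le_trans ?_ (le_log_one_add_of_nonneg hx)
  rw [le_div_iff₀ (by linarith)]
  nlinarith [pow_nonneg hx 3]

theorem add_sq_mul_le_log_one_add {b x : ℝ} (hb0 : 0 < b) (hb1 : b < 1) (hx : -b ≤ x) :
    x + x ^ 2 * ((log (1 - b) + b) / b ^ 2) ≤ log (1 + x) := by
  rcases le_or_gt 0 x with hx0 | hx0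
  · have hK : (log (1 - b) + b) / b ^ 2 ≤ -1 / 2 := by
      rw [div_le_iff₀ (by positivity)]
      linarith [sq_div_two_le_neg_log_one_sub_sub hb0.le hb1]
    nlinarith [sub_sq_div_two_le_log_one_add hx0, sq_nonneg x]
  · have h := sq_mul_neg_log_one_sub_sub_le (a := -x) (by linarith) (by linarith) hb1
    simp only [sub_neg_eq_add, neg_sq] at h
    have hratio : x ^ 2 * ((log (1 - b) + b) / b ^ 2) ≤ log (1 + x) - x := by
      rw [mul_div_assoc', div_le_iff₀ (by positivity)]
      linarith
    linarith

/-- **Lemma 4.1 of Fan et al..** Let `c > 0`, let `ξ` be a real number with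
`ξ ≥ −c`, and let `λ ∈ [0, 1/c)`. Then
`1 + λξ ≥ exp(λξ + (ξ²/c²)(log(1 − cλ) + cλ))`. -/
theorem statement17
    (c ξ lam : ℝ) (hc : 0 < c) (hξ : -c ≤ ξ) (hlam0 : 0 ≤ lam) (hlam1 : lam < 1 / c) :
    Real.exp (lam * ξ + ξ ^ 2 / c ^ 2 * (Real.log (1 - c * lam) + c * lam)) ≤ 1 + lam * ξ := by
  rcases hlam0.eq_or_lt with rfl | hlam
  · simp
  have hcl : c * lam < 1 := by rwa [lt_div_iff₀ hc, mul_comm] at hlam1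
  have hx : -(c * lam) ≤ lam * ξ := by nlinarith
  have hrw : ξ ^ 2 / c ^ 2 * (log (1 - c * lam) + c * lam)
      = (lam * ξ) ^ 2 * ((log (1 - c * lam) + c * lam) / (c * lam) ^ 2) := by
    field_simp
  rw [hrw, ← le_log_iff_exp_le (by nlinarith)]
  exact add_sq_mul_le_log_one_add (by positivity) hcl hx

end RLFA
end

section
/- The function h : (−1, ∞) → ℝ defined by h(x) = (log(1+x) − x)/(x²/2) for x ≠ 0 and h(0) = −1 is monotonically increasing on (−1, ∞): for all −1 < x ≤ y, h(x) ≤ h(y). -/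
/-!
Away from `0`, `h'(x) = 2 g(x) / x³` with `g(x) = 2x - x²/(1+x) - 2 log(1+x)`. Since
`g' = x²/(1+x)² ≥ 0` and `g(0) = 0`, `g` has the sign of `x`, so `h' ≥ 0` on `(-1, 0)` and on
`(0, ∞)`. The two pieces are glued through the value `-1` at `0`: `h(x) + 1 = 2 F(x) / x²` with
`F(x) = log(1+x) - x + x²/2`, and `F' = x²/(1+x) ≥ 0`, `F(0) = 0`.
-/

namespace RLFA

/-- The function `h(x) = (log(1+x) − x)/(x²/2)` for `x ≠ 0`, continuously extended by
`h(0) = −1`. -/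
noncomputable def hFun (x : ℝ) : ℝ :=
  if x = 0 then -1 else (Real.log (1 + x) - x) / (x ^ 2 / 2)

open Real Set

lemma monotoneOn_of_hasDerivAt_nonneg {D : Set ℝ} (hD : Convex ℝ D)
    {f f' : ℝ → ℝ} (hf : ∀ x ∈ D, HasDerivAt f (f' x) x) (hf' : ∀ x ∈ D, 0 ≤ f' x) :
    MonotoneOn f D := by
  refine monotoneOn_of_hasDerivWithinAt_nonneg hD
    (fun x hx => (hf x hx).continuousAt.continuousWithinAt) (fun x hx => ?_)
    (fun x hx => hf' x (interior_subset hx))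
  exact (hf x (interior_subset hx)).hasDerivWithinAt

lemma hasDerivAt_log_one_add {x : ℝ} (hx : -1 < x) :
    HasDerivAt (fun t => log (1 + t)) (1 + x)⁻¹ x := by
  simpa only [one_div] using
    ((hasDerivAt_id' x).const_add 1).log (by linarith : (0 : ℝ) < 1 + x).ne'

noncomputable def logTaylorRemainder (x : ℝ) : ℝ := log (1 + x) - x + x ^ 2 / 2

noncomputable def hFunDerivNum (x : ℝ) : ℝ := 2 * x - x ^ 2 / (1 + x) - 2 * log (1 + x)

lemma hasDerivAt_logTaylorRemainder {x : ℝ} (hx : -1 < x) :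
    HasDerivAt logTaylorRemainder (x ^ 2 / (1 + x)) x := by
  have h1 : 1 + x ≠ 0 := by linarith
  refine (((hasDerivAt_log_one_add hx).sub (hasDerivAt_id' x)).add
    ((hasDerivAt_pow 2 x).div_const 2)).congr_deriv ?_
  field_simp
  ring

lemma hasDerivAt_hFunDerivNum {x : ℝ} (hx : -1 < x) :
    HasDerivAt hFunDerivNum (x ^ 2 / (1 + x) ^ 2) x := by
  have h1 : 1 + x ≠ 0 := by linarith
  refine ((((hasDerivAt_id' x).const_mul 2).sub
    ((hasDerivAt_pow 2 x).div ((hasDerivAt_id' x).const_add 1) h1)).sub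
    ((hasDerivAt_log_one_add hx).const_mul 2)).congr_deriv ?_
  field_simp
  ring

lemma logTaylorRemainder_zero : logTaylorRemainder 0 = 0 := by
  simp [logTaylorRemainder]

lemma hFunDerivNum_zero : hFunDerivNum 0 = 0 := by
  simp [hFunDerivNum]

lemma monotoneOn_logTaylorRemainder : MonotoneOn logTaylorRemainder (Ioi (-1)) :=
  monotoneOn_of_hasDerivAt_nonneg (convex_Ioi _)
    (fun _ hx => hasDerivAt_logTaylorRemainder hx)
    (fun x hx => div_nonneg (sq_nonneg x) (by linarith [mem_Ioi.mp hx]))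

lemma monotoneOn_hFunDerivNum : MonotoneOn hFunDerivNum (Ioi (-1)) :=
  monotoneOn_of_hasDerivAt_nonneg (convex_Ioi _)
    (fun _ hx => hasDerivAt_hFunDerivNum hx) (fun x _ => by positivity)

lemma hasDerivAt_hFun {x : ℝ} (hx : -1 < x) (hx0 : x ≠ 0) :
    HasDerivAt hFun (2 * hFunDerivNum x / x ^ 3) x := by
  have h1 : 1 + x ≠ 0 := by linarith
  have hformula : HasDerivAt (fun t => (log (1 + t) - t) / (t ^ 2 / 2))
      (2 * hFunDerivNum x / x ^ 3) x := by
    refine (((hasDerivAt_log_one_add hx).sub (hasDerivAt_id' x)).div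
      ((hasDerivAt_pow 2 x).div_const 2) (by positivity)).congr_deriv ?_
    simp only [hFunDerivNum, Pi.sub_apply]
    field_simp
    ring
  exact hformula.congr_of_eventuallyEq ((eventually_ne_nhds hx0).mono fun t ht => if_neg ht)

lemma hFunDerivNum_div_pow_three_nonneg {x : ℝ} (hx : -1 < x) : 0 ≤ hFunDerivNum x / x ^ 3 := by
  have h0 : (0 : ℝ) ∈ Ioi (-1) := by norm_num
  rcases le_total x 0 with hneg | hpos
  · exact div_nonneg_of_nonpos (hFunDerivNum_zero ▸ monotoneOn_hFunDerivNum hx h0 hneg)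
      (Odd.pow_nonpos (by decide) hneg)
  · exact div_nonneg (hFunDerivNum_zero ▸ monotoneOn_hFunDerivNum h0 hx hpos) (by positivity)

lemma monotoneOn_hFun {D : Set ℝ} (hD : Convex ℝ D) (hD1 : D ⊆ Ioi (-1)) (hD0 : 0 ∉ D) :
    MonotoneOn hFun D :=
  monotoneOn_of_hasDerivAt_nonneg hD
    (fun x hx => hasDerivAt_hFun (hD1 hx) (ne_of_mem_of_not_mem hx hD0))
    (fun x hx => by
      rw [mul_div_assoc]
      exact mul_nonneg zero_le_two (hFunDerivNum_div_pow_three_nonneg (hD1 hx)))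

lemma hFun_add_one {x : ℝ} (hx0 : x ≠ 0) :
    hFun x + 1 = logTaylorRemainder x / (x ^ 2 / 2) := by
  rw [hFun, if_neg hx0, logTaylorRemainder]
  field_simp

lemma hFun_le_neg_one {x : ℝ} (hx : -1 < x) (hx0 : x ≤ 0) : hFun x ≤ -1 := by
  rcases hx0.lt_or_eq with hneg | rfl
  · have hF : logTaylorRemainder x ≤ 0 :=
      logTaylorRemainder_zero ▸ monotoneOn_logTaylorRemainder hx (by norm_num) hx0
    have hsum : hFun x + 1 ≤ 0 :=
      hFun_add_one hneg.ne ▸ div_nonpos_of_nonpos_of_nonneg hF (by positivity)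
    linarith
  · simp [hFun]

lemma neg_one_le_hFun {y : ℝ} (hy : 0 ≤ y) : -1 ≤ hFun y := by
  rcases hy.lt_or_eq with hpos | rfl
  · have hF : 0 ≤ logTaylorRemainder y :=
      logTaylorRemainder_zero ▸ monotoneOn_logTaylorRemainder (by norm_num)
        (mem_Ioi.mpr (by linarith)) hy
    have hsum : 0 ≤ hFun y + 1 := hFun_add_one hpos.ne' ▸ div_nonneg hF (by positivity)
    linarith
  · simp [hFun]

/-- The function `h : (−1, ∞) → ℝ` defined by
`h(x) = (log(1+x) − x)/(x²/2)` for `x ≠ 0` and `h(0) = −1` is monotonically increasing on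
`(−1, ∞)`: for all `−1 < x ≤ y`, `h(x) ≤ h(y)`. -/
theorem statement18 (x y : ℝ) (hx : -1 < x) (hxy : x ≤ y) : hFun x ≤ hFun y := by
  rcases lt_or_ge y 0 with hy | hy
  · exact monotoneOn_hFun (convex_Ioo _ _) Ioo_subset_Ioi_self (by simp)
      ⟨hx, hxy.trans_lt hy⟩ ⟨hx.trans_le hxy, hy⟩ hxy
  rcases lt_or_ge 0 x with hx0 | hx0
  · exact monotoneOn_hFun (convex_Ioi _) (Ioi_subset_Ioi (by norm_num)) (by simp)
      hx0 (hx0.trans_le hxy) hxy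
  exact (hFun_le_neg_one hx hx0).trans (neg_one_le_hFun hy)

end RLFA
end
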